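/- In the Gaussian location model, if θ̂_n satisfies P_{n,0}(θ̂_n = 0) → 1, then even the local maximal risk diverges: for any positive sequence ρ_n with √n·ρ_n → ∞, sup_{|θ| < ρ_n} E_{n,θ}[n(θ̂_n − θ)²] → ∞ as n → ∞. -/

import Mathlib

/-!
The likelihood ratio of `N(θ,1)^⊗n` against `N(0,1)^⊗n` has second moment `exp (n θ²)` under
the null, so Cauchy–Schwarz gives `P_θ(E)² ≤ exp (n θ²) P_0(E)` for every event `E`.
Fix `s > 0` and take `θ = s / √n`, which lies in the neighbourhood once `√n ρ_n > s`.
Since `P_0(θ̂_n ≠ 0) → 0`, eventually `P_θ(θ̂_n ≠ 0) ≤ 1/2`, and on `{θ̂_n = 0}` the loss is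
`n θ² = s²`; hence the local maximal risk is eventually at least `s² / 2`, and `s` is arbitrary.
-/

open MeasureTheory ProbabilityTheory Filter Topology
open scoped ENNReal

/-- Joint law of a sample of size `n` of i.i.d. `N(θ,1)` observations. -/
noncomputable def gaussP (n : ℕ) (θ : ℝ) : Measure (Fin n → ℝ) :=
  Measure.pi fun _ => gaussianReal θ 1

namespace MeasureTheory

variable {ι : Type*} [Fintype ι] {α : ι → Type*} [∀ i, MeasurableSpace (α i)]
  {μ : ∀ i, Measure (α i)} [∀ i, IsProbabilityMeasure (μ i)]

theorem lintegral_pi_prod {f : ∀ i, α i → ℝ≥0∞} (hf : ∀ i, Measurable (f i)) :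
    ∫⁻ y, ∏ i, f i (y i) ∂Measure.pi μ = ∏ i, ∫⁻ x, f i x ∂μ i := by
  rw [lintegral_prod_eq_prod_lintegral_of_indepFun _ _
    (iIndepFun_pi fun i => (hf i).aemeasurable) fun i => (hf i).comp (measurable_pi_apply i)]
  exact Finset.prod_congr rfl fun i _ => (measurePreserving_eval μ i).lintegral_comp (hf i)

theorem Measure.pi_withDensity_ofReal {f : ∀ i, α i → ℝ} (hf : ∀ i, Measurable (f i)) :
    Measure.pi (fun i => (μ i).withDensity fun x => ENNReal.ofReal (f i x))
      = (Measure.pi μ).withDensity fun y => ∏ i, ENNReal.ofReal (f i (y i)) := by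
  refine Measure.pi_eq fun s hs => ?_
  have hind : (Set.univ.pi s).indicator (fun y => ∏ i, ENNReal.ofReal (f i (y i)))
      = fun y => ∏ i, (s i).indicator (fun x => ENNReal.ofReal (f i x)) (y i) := by
    ext y
    by_cases h : y ∈ Set.univ.pi s
    · rw [Set.indicator_of_mem h]
      exact Finset.prod_congr rfl fun i _ =>
        (Set.indicator_of_mem (h i trivial) fun x => ENNReal.ofReal (f i x)).symm
    · obtain ⟨i, hi⟩ := not_forall.mp (Set.mem_univ_pi.not.mp h)
      rw [Set.indicator_of_notMem h]
      exact (Finset.prod_eq_zero (Finset.mem_univ i) (Set.indicator_of_notMem hi _)).symm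
  rw [withDensity_apply _ (.univ_pi hs), ← lintegral_indicator (.univ_pi hs), hind,
    lintegral_pi_prod fun i => ((hf i).ennreal_ofReal).indicator (hs i)]
  exact Finset.prod_congr rfl fun i _ => by
    rw [withDensity_apply _ (hs i), lintegral_indicator (hs i)]

theorem withDensity_apply_sq_le {β : Type*} [MeasurableSpace β] (ν : Measure β)
    {L : β → ℝ≥0∞} (hL : Measurable L) {s : Set β} (hs : MeasurableSet s) :
    ν.withDensity L s ^ 2 ≤ (∫⁻ x, L x ^ 2 ∂ν) * ν s := by
  have hsq_ind : ∀ x, s.indicator (1 : β → ℝ≥0∞) x ^ 2 = s.indicator 1 x := by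
    intro x
    by_cases hx : x ∈ s <;> simp [hx]
  have hCS := ENNReal.lintegral_mul_le_Lp_mul_Lq ν Real.HolderConjugate.two_two
    (g := s.indicator 1) hL.aemeasurable (measurable_one.indicator hs).aemeasurable
  simp only [ENNReal.rpow_two, hsq_ind, lintegral_indicator_one hs] at hCS
  calc ν.withDensity L s ^ 2 = (∫⁻ x, L x * s.indicator 1 x ∂ν) ^ 2 := by
        rw [withDensity_apply _ hs, ← lintegral_indicator hs]
        congr 2 with x
        by_cases hx : x ∈ s <;> simp [hx]
    _ ≤ ((∫⁻ x, L x ^ 2 ∂ν) ^ (1 / 2 : ℝ) * ν s ^ (1 / 2 : ℝ)) ^ 2 := by gcongr; exact hCS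
    _ = (∫⁻ x, L x ^ 2 ∂ν) * ν s := by
        rw [mul_pow, one_div, show (2 : ℝ) = (2 : ℕ) by norm_num,
          ENNReal.rpow_inv_natCast_pow two_ne_zero, ENNReal.rpow_inv_natCast_pow two_ne_zero]

end MeasureTheory

namespace ProbabilityTheory

noncomputable def gaussianTilt (θ x : ℝ) : ℝ := Real.exp (θ * x - θ ^ 2 / 2)

lemma gaussianTilt_nonneg (θ x : ℝ) : 0 ≤ gaussianTilt θ x := Real.exp_nonneg _

lemma measurable_gaussianTilt (θ : ℝ) : Measurable (gaussianTilt θ) := by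
  unfold gaussianTilt; fun_prop

lemma gaussianPDFReal_eq_gaussianTilt_mul (θ x : ℝ) :
    gaussianPDFReal θ 1 x = gaussianTilt θ x * gaussianPDFReal 0 1 x := by
  simp only [gaussianPDFReal, gaussianTilt, NNReal.coe_one, mul_one, sub_zero]
  rw [show -(x - θ) ^ 2 / 2 = (θ * x - θ ^ 2 / 2) + -x ^ 2 / 2 by ring, Real.exp_add]
  ring

lemma gaussianReal_eq_withDensity_gaussianTilt (θ : ℝ) :
    gaussianReal θ 1
      = (gaussianReal 0 1).withDensity fun x => ENNReal.ofReal (gaussianTilt θ x) := by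
  rw [gaussianReal_of_var_ne_zero θ one_ne_zero, gaussianReal_of_var_ne_zero 0 one_ne_zero,
    ← withDensity_mul _ (measurable_gaussianPDF 0 1) (measurable_gaussianTilt θ).ennreal_ofReal]
  congr 1 with x
  simp only [gaussianPDF, Pi.mul_apply, gaussianPDFReal_eq_gaussianTilt_mul θ x]
  rw [ENNReal.ofReal_mul (gaussianTilt_nonneg θ x), mul_comm]

lemma gaussianTilt_sq (θ x : ℝ) :
    gaussianTilt θ x ^ 2 = Real.exp (θ ^ 2) * gaussianTilt (2 * θ) x := by
  simp only [gaussianTilt, ← Real.exp_nat_mul, ← Real.exp_add]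
  ring_nf

lemma lintegral_gaussianTilt_sq (θ : ℝ) :
    ∫⁻ x, ENNReal.ofReal (gaussianTilt θ x) ^ 2 ∂gaussianReal 0 1
      = ENNReal.ofReal (Real.exp (θ ^ 2)) := by
  simp only [← ENNReal.ofReal_pow (gaussianTilt_nonneg θ _), gaussianTilt_sq,
    ENNReal.ofReal_mul (Real.exp_nonneg _)]
  rw [lintegral_const_mul _ (measurable_gaussianTilt _).ennreal_ofReal,
    ← setLIntegral_univ, ← withDensity_apply _ MeasurableSet.univ,
    ← gaussianReal_eq_withDensity_gaussianTilt, measure_univ, mul_one]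

end ProbabilityTheory

instance (n : ℕ) (θ : ℝ) : IsProbabilityMeasure (gaussP n θ) := by
  unfold gaussP; infer_instance

lemma gaussP_eq_withDensity (n : ℕ) (θ : ℝ) :
    gaussP n θ
      = (gaussP n 0).withDensity fun y => ∏ i, ENNReal.ofReal (gaussianTilt θ (y i)) := by
  rw [gaussP, gaussP, ← Measure.pi_withDensity_ofReal fun _ => measurable_gaussianTilt θ]
  exact congrArg Measure.pi (funext fun _ => gaussianReal_eq_withDensity_gaussianTilt θ)

lemma lintegral_prod_gaussianTilt_sq (n : ℕ) (θ : ℝ) :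
    ∫⁻ y, (∏ i, ENNReal.ofReal (gaussianTilt θ (y i))) ^ 2 ∂gaussP n 0
      = ENNReal.ofReal (Real.exp (n * θ ^ 2)) := by
  simp only [← Finset.prod_pow]
  rw [gaussP, lintegral_pi_prod fun _ => (measurable_gaussianTilt θ).ennreal_ofReal.pow_const 2]
  simp only [lintegral_gaussianTilt_sq, Finset.prod_const, Finset.card_univ, Fintype.card_fin]
  rw [← ENNReal.ofReal_pow (Real.exp_nonneg _), ← Real.exp_nat_mul]

lemma gaussP_apply_sq_le (n : ℕ) (θ : ℝ) {s : Set (Fin n → ℝ)} (hs : MeasurableSet s) :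
    gaussP n θ s ^ 2 ≤ ENNReal.ofReal (Real.exp (n * θ ^ 2)) * gaussP n 0 s := by
  rw [← lintegral_prod_gaussianTilt_sq, gaussP_eq_withDensity n θ]
  exact withDensity_apply_sq_le _
    (Finset.measurable_prod _ fun i _ =>
      (measurable_gaussianTilt θ).ennreal_ofReal.comp (measurable_pi_apply i)) hs

lemma half_le_gaussP_of_le {n : ℕ} {θ : ℝ} {s : Set (Fin n → ℝ)} (hs : MeasurableSet s)
    (h : gaussP n 0 sᶜ ≤ 2⁻¹ ^ 2 / ENNReal.ofReal (Real.exp (n * θ ^ 2))) :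
    2⁻¹ ≤ gaussP n θ s := by
  rw [ENNReal.le_div_iff_mul_le (.inl (by simp [Real.exp_pos])) (.inl ENNReal.ofReal_ne_top),
    mul_comm] at h
  have hcompl : gaussP n θ sᶜ ≤ 2⁻¹ :=
    (ENNReal.pow_le_pow_left_iff two_ne_zero).mp ((gaussP_apply_sq_le n θ hs.compl).trans h)
  rw [prob_compl_eq_one_sub hs] at hcompl
  calc 2⁻¹ = 1 - 2⁻¹ := ENNReal.one_sub_inv_two.symm
    _ ≤ 1 - (1 - gaussP n θ s) := tsub_le_tsub_left hcompl 1
    _ = gaussP n θ s := ENNReal.sub_sub_cancel ENNReal.one_ne_top prob_le_one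

lemma ofReal_mul_measure_le_lintegral_sq {Ω : Type*} [MeasurableSpace Ω] (μ : Measure Ω)
    {f : Ω → ℝ} (hf : Measurable f) (c θ : ℝ) :
    ENNReal.ofReal (c * θ ^ 2) * μ {y | f y = 0}
      ≤ ∫⁻ y, ENNReal.ofReal (c * (f y - θ) ^ 2) ∂μ := by
  have hA : MeasurableSet {y | f y = 0} := hf (measurableSet_singleton 0)
  calc ENNReal.ofReal (c * θ ^ 2) * μ {y | f y = 0}
      = ∫⁻ y in {y | f y = 0}, ENNReal.ofReal (c * (f y - θ) ^ 2) ∂μ := by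
        rw [setLIntegral_congr_fun hA fun y (hy : f y = 0) => by rw [hy, zero_sub, neg_sq],
          setLIntegral_const]
    _ ≤ ∫⁻ y, ENNReal.ofReal (c * (f y - θ) ^ 2) ∂μ := setLIntegral_le_lintegral _ _

lemma exists_abs_lt_and_mul_sq_eq {n : ℕ} {r s : ℝ} (hs : 0 ≤ s) (h : s < √n * r) :
    ∃ θ, |θ| < r ∧ n * θ ^ 2 = s ^ 2 := by
  have hsqrt : 0 < √(n : ℝ) :=
    (Real.sqrt_nonneg _).lt_of_ne fun h0 => by rw [← h0, zero_mul] at h; linarith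
  have hn : (n : ℝ) ≠ 0 := (Real.sqrt_pos.mp hsqrt).ne'
  refine ⟨s / √n, ?_, ?_⟩
  · rwa [abs_of_nonneg (div_nonneg hs hsqrt.le), div_lt_iff₀ hsqrt, mul_comm]
  · rw [div_pow, Real.sq_sqrt (Nat.cast_nonneg n)]
    field_simp

theorem stmt_10_general
    (est : (n : ℕ) → (Fin n → ℝ) → ℝ)
    (hmeas : ∀ n, Measurable (est n))
    (hsparse : Tendsto (fun n => gaussP n 0 {y | est n y = 0}) atTop (𝓝 1))
    (ρ : ℕ → ℝ)
    (hρ : Tendsto (fun n : ℕ => Real.sqrt n * ρ n) atTop atTop) :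
    Tendsto (fun n : ℕ => ⨆ θ : ℝ, ⨆ _ : |θ| < ρ n,
        ∫⁻ y, ENNReal.ofReal ((n : ℝ) * (est n y - θ) ^ 2) ∂(gaussP n θ))
      atTop (𝓝 ⊤) := by
  rw [ENNReal.tendsto_nhds_top_iff_nat]
  intro N
  obtain ⟨s, hs_nonneg, hs_sq⟩ : ∃ s : ℝ, 0 ≤ s ∧ s ^ 2 = 2 * (N + 1) :=
    ⟨√(2 * (N + 1)), Real.sqrt_nonneg _, Real.sq_sqrt (by positivity)⟩
  have hA : ∀ n, MeasurableSet {y | est n y = 0} := fun n =>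
    hmeas n (measurableSet_singleton 0)
  have hcompl : Tendsto (fun n => gaussP n 0 {y | est n y = 0}ᶜ) atTop (𝓝 0) := by
    simp only [prob_compl_eq_one_sub (hA _)]
    simpa using ENNReal.Tendsto.sub tendsto_const_nhds hsparse (.inl ENNReal.one_ne_top)
  have hδ : (0 : ℝ≥0∞) < 2⁻¹ ^ 2 / ENNReal.ofReal (Real.exp (s ^ 2)) :=
    ENNReal.div_pos (by simp) ENNReal.ofReal_ne_top
  filter_upwards [hρ.eventually_gt_atTop s, hcompl.eventually (eventually_le_nhds hδ)]
    with n hρn hAc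
  obtain ⟨θ, habs, hnθ⟩ := exists_abs_lt_and_mul_sq_eq hs_nonneg hρn
  have hhalf : 2⁻¹ ≤ gaussP n θ {y | est n y = 0} := half_le_gaussP_of_le (hA n) (hnθ ▸ hAc)
  calc (N : ℝ≥0∞) < ENNReal.ofReal (s ^ 2) * 2⁻¹ := by
        rw [hs_sq, ENNReal.ofReal_mul zero_le_two, ENNReal.ofReal_ofNat, mul_right_comm,
          ENNReal.mul_inv_cancel two_ne_zero ENNReal.ofNat_ne_top, one_mul, ← Nat.cast_add_one,
          ENNReal.ofReal_natCast]
        exact_mod_cast N.lt_succ_self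
    _ ≤ ENNReal.ofReal (n * θ ^ 2) * gaussP n θ {y | est n y = 0} := by rw [hnθ]; gcongr
    _ ≤ _ := ofReal_mul_measure_le_lintegral_sq _ (hmeas n) _ θ
    _ ≤ _ := le_iSup₂_of_le θ habs le_rfl

theorem stmt_10
    (est : (n : ℕ) → (Fin n → ℝ) → ℝ)
    (hmeas : ∀ n, Measurable (est n))
    (hsparse : Tendsto (fun n => gaussP n 0 {y | est n y = 0}) atTop (𝓝 1))
    (ρ : ℕ → ℝ) (hρpos : ∀ n, 0 < ρ n)
    (hρ : Tendsto (fun n : ℕ => Real.sqrt n * ρ n) atTop atTop) :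
    Tendsto (fun n : ℕ => ⨆ θ : ℝ, ⨆ _ : |θ| < ρ n,
        ∫⁻ y, ENNReal.ofReal ((n : ℝ) * (est n y - θ) ^ 2) ∂(gaussP n θ))
      atTop (𝓝 ⊤) :=
  stmt_10_general est hmeas hsparse ρ hρ
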